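/- arXiv:1501.01161 — 4 statements merged into one kernel-verified Lean document; each statement's English description precedes it below -/
import Mathlib

section
/- For f ∈ H̄²'⁰ and a polynomial q_n of degree at most n with all roots in the open unit disk, the function q̃_n · P₊(f q_n / q̃_n) is a polynomial of degree at most n−1, where q̃_n(z) = zⁿ · conj(q_n(1/z̄)) and P₊ is the analytic Riesz projection. -/
open MeasureTheory Complex Real Polynomial

noncomputable section

/-- Boundary trace on the unit circle: `θ ↦ f (e^{iθ})`. -/
def tr (f : ℂ → ℂ) : ℝ → ℂ := fun θ => f (Complex.exp ((θ : ℂ) * Complex.I))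

/-- Arclength measure on one period of the circle. -/
def μc : Measure ℝ := volume.restrict (Set.Ioc 0 (2 * π))

/-- `k`-th Fourier coefficient of the boundary values of `f`. -/
def fc (f : ℂ → ℂ) (k : ℤ) : ℂ :=
  (2 * π : ℂ)⁻¹ * ∫ θ, Complex.exp (-(k : ℂ) * (θ : ℂ) * Complex.I) * tr f θ ∂μc

/-- Squared (normalized) L²(𝕋) norm of the boundary values of `f`. -/
def l2sq (f : ℂ → ℂ) : ℝ := (2 * π)⁻¹ * ∫ θ, ‖tr f θ‖ ^ 2 ∂μc

/-- (Normalized) L²(𝕋) norm of the boundary values of `f`. -/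
def l2 (f : ℂ → ℂ) : ℝ := Real.sqrt (l2sq f)

/-- `f` has square-integrable boundary values on the circle. -/
def MemL2circ (f : ℂ → ℂ) : Prop := MemLp (tr f) 2 μc

/-- `‖P₋ g‖₂`, the L² norm of the anti-analytic projection, via Parseval:
the square root of the sum of the squared moduli of the negative-index
Fourier coefficients. -/
def normPminus (g : ℂ → ℂ) : ℝ := Real.sqrt (∑' k : ℕ, ‖fc g (-(k : ℤ) - 1)‖ ^ 2)

/-- Reciprocal polynomial `q̃(z) = zⁿ conj (q (1/z̄))` of `q` in degree `n`. -/
def recip (n : ℕ) (q : Polynomial ℂ) : Polynomial ℂ := (q.map (starRingEnd ℂ)).reflect n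

/-- L²(𝕋) distance from `f` to a set `S` of functions. -/
def d2circ (f : ℂ → ℂ) (S : Set (ℂ → ℂ)) : ℝ :=
  sInf {x | ∃ r ∈ S, x = l2 (fun z => f z - r z)}

/-- Membership in H², expressed through boundary values: square-integrable with
vanishing negative Fourier coefficients. -/
def inH2 (v : ℂ → ℂ) : Prop := MemL2circ v ∧ ∀ k : ℤ, k < 0 → fc v k = 0

/-- (Normalized) L²(𝕋) inner product of boundary values. -/
def innerC (u v : ℂ → ℂ) : ℂ :=
  (2 * π : ℂ)⁻¹ * ∫ θ, tr u θ * (starRingEnd ℂ) (tr v θ) ∂μc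

/-- The analytic Riesz projection, as a Cauchy integral, evaluated at a point of
the open unit disk. -/
def Pplus (g : ℂ → ℂ) (z : ℂ) : ℂ :=
  (2 * π : ℂ)⁻¹ * ∫ θ,
    (Complex.exp ((θ : ℂ) * Complex.I) / (Complex.exp ((θ : ℂ) * Complex.I) - z)) * tr g θ ∂μc

/-! The Cauchy integral `P₊ g` has Taylor coefficients `ĝ(k)`, `k ≥ 0`. For `k ≥ n ≥ deg q̃`,
the `k`-th Taylor coefficient of `q̃ · P₊ g` is therefore the `k`-th Fourier coefficient of `q̃ g`.
For `g = f q / q̃` this is `(q f)^(k) = ∑ⱼ q_j f̂(k - j)`, which vanishes because `f̂` vanishes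
on `ℕ`. The division is harmless: on the circle `q̃(w) = wⁿ conj (q w)`, so `q̃` has no zeros
there. -/

open Finset

instance : IsFiniteMeasure μc := by
  unfold μc
  infer_instance

section Fourier

variable {g : ℂ → ℂ}

lemma exp_mul_I_mem_sphere (θ : ℝ) : Complex.exp (θ * I) ∈ Metric.sphere (0 : ℂ) 1 := by
  simp [Complex.norm_exp_ofReal_mul_I]

lemma integrable_tr_mul (hg : Integrable (tr g) μc) {F : ℂ → ℂ}
    (hF : ContinuousOn F (Metric.sphere 0 1)) :
    Integrable (tr fun w => F w * g w) μc := by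
  obtain ⟨C, hC⟩ := (isCompact_sphere (0 : ℂ) 1).exists_bound_of_continuousOn hF
  have hFe : Continuous fun θ : ℝ => F (Complex.exp (θ * I)) :=
    hF.comp_continuous (by fun_prop) exp_mul_I_mem_sphere
  exact hg.bdd_mul hFe.aestronglyMeasurable (ae_of_all _ fun θ => hC _ (exp_mul_I_mem_sphere θ))

lemma integrable_exp_mul_tr (hg : Integrable (tr g) μc) (k : ℤ) :
    Integrable (fun θ : ℝ => Complex.exp (-(k : ℂ) * θ * I) * tr g θ) μc :=
  hg.bdd_mul (c := 1) (by fun_prop) <| ae_of_all _ fun θ => by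
    rw [show -(k : ℂ) * θ * I = ((-k * θ : ℝ) : ℂ) * I by push_cast; ring,
      Complex.norm_exp_ofReal_mul_I]

lemma fc_sum_mul {ι : Type*} {s : Finset ι} {G : ι → ℂ → ℂ}
    (hG : ∀ i ∈ s, Integrable (tr (G i)) μc) (c : ι → ℂ) (k : ℤ) :
    fc (fun w => ∑ i ∈ s, c i * G i w) k = ∑ i ∈ s, c i * fc (G i) k := by
  have hpt : (fun θ : ℝ => Complex.exp (-(k : ℂ) * θ * I) * tr (fun w => ∑ i ∈ s, c i * G i w) θ)
      = fun θ : ℝ => ∑ i ∈ s, c i * (Complex.exp (-(k : ℂ) * θ * I) * tr (G i) θ) := by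
    ext θ
    simp only [tr, Finset.mul_sum]
    exact sum_congr rfl fun _ _ => by ring
  rw [fc, hpt, integral_finsetSum _ fun i hi => (integrable_exp_mul_tr (hG i hi) k).const_mul _,
    Finset.mul_sum]
  refine sum_congr rfl fun i _ => ?_
  rw [integral_const_mul, fc]
  ring

lemma fc_pow_mul (g : ℂ → ℂ) (j : ℕ) (k : ℤ) : fc (fun w => w ^ j * g w) k = fc g (k - j) := by
  simp only [fc, tr, ← mul_assoc, ← Complex.exp_nat_mul, ← Complex.exp_add]
  congr 3; ext θ; congr 2; push_cast; ring

lemma fc_eval_mul (hg : Integrable (tr g) μc) (Q : ℂ[X]) {m : ℕ} (hQ : Q.natDegree ≤ m) :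
    fc (fun w => Q.eval w * g w) m = ∑ p ∈ antidiagonal m, Q.coeff p.1 * fc g p.2 := by
  have hG : ∀ i ∈ range (m + 1), Integrable (tr fun w => w ^ i * g w) μc :=
    fun i _ => integrable_tr_mul hg (continuousOn_pow i)
  simp_rw [eval_eq_sum_range' (Nat.lt_succ_of_le hQ), sum_mul, mul_assoc]
  rw [fc_sum_mul hG, Nat.sum_antidiagonal_eq_sum_range_succ_mk]
  refine sum_congr rfl fun i hi => ?_
  rw [fc_pow_mul, Nat.cast_sub (Nat.lt_succ_iff.mp (mem_range.mp hi))]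

lemma norm_fc_le (g : ℂ → ℂ) (k : ℤ) : ‖fc g k‖ ≤ (2 * π)⁻¹ * ∫ θ, ‖tr g θ‖ ∂μc := by
  have hexp (θ : ℝ) : ‖Complex.exp (-(k : ℂ) * θ * I)‖ = 1 := by
    rw [show -(k : ℂ) * θ * I = ((-k * θ : ℝ) : ℂ) * I by push_cast; ring,
      Complex.norm_exp_ofReal_mul_I]
  calc ‖fc g k‖ = (2 * π)⁻¹ * ‖∫ θ, Complex.exp (-(k : ℂ) * θ * I) * tr g θ ∂μc‖ := by
        rw [fc, norm_mul, norm_inv, norm_mul, Complex.norm_ofNat, Complex.norm_real,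
          Real.norm_of_nonneg pi_pos.le]
    _ ≤ (2 * π)⁻¹ * ∫ θ, ‖tr g θ‖ ∂μc := by
        gcongr
        refine (norm_integral_le_integral_norm _).trans_eq ?_
        simp only [norm_mul, hexp, one_mul]

lemma summable_norm_fc_mul_pow (g : ℂ → ℂ) {z : ℂ} (hz : ‖z‖ < 1) :
    Summable fun k : ℕ => ‖fc g k * z ^ k‖ := by
  refine .of_nonneg_of_le (fun _ => norm_nonneg _) (fun k => ?_)
    ((summable_geometric_of_lt_one (norm_nonneg z) hz).mul_left
      ((2 * π)⁻¹ * ∫ θ, ‖tr g θ‖ ∂μc))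
  rw [norm_mul, norm_pow]
  exact mul_le_mul_of_nonneg_right (norm_fc_le g k) (by positivity)

lemma hasSum_Pplus (hg : Integrable (tr g) μc) {z : ℂ} (hz : ‖z‖ < 1) :
    HasSum (fun k : ℕ => fc g k * z ^ k) (Pplus g z) := by
  set r : ℝ → ℂ := fun θ => z * Complex.exp (-(θ * I))
  have hr (θ : ℝ) : ‖r θ‖ = ‖z‖ := by
    rw [norm_mul, ← neg_mul, ← Complex.ofReal_neg, Complex.norm_exp_ofReal_mul_I, mul_one]
  have hgeom (θ : ℝ) : HasSum (fun k : ℕ => r θ ^ k * tr g θ)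
      (Complex.exp (θ * I) / (Complex.exp (θ * I) - z) * tr g θ) := by
    have hne : Complex.exp (θ * I) - z ≠ 0 := by
      intro h
      have := congrArg norm (sub_eq_zero.mp h)
      rw [Complex.norm_exp_ofReal_mul_I] at this
      exact hz.ne this.symm
    have hsum : Complex.exp (θ * I) / (Complex.exp (θ * I) - z) = (1 - r θ)⁻¹ := by
      simp only [r, Complex.exp_neg]
      field_simp
    rw [hsum]
    exact (hasSum_geometric_of_norm_lt_one ((hr θ).trans_lt hz)).mul_right (tr g θ)
  have hint := hasSum_integral_of_dominated_convergence (μ := μc)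
    (F := fun k θ => r θ ^ k * tr g θ)
    (fun k θ => ‖z‖ ^ k * ‖tr g θ‖)
    (fun k => (by fun_prop : Continuous fun θ => r θ ^ k).aestronglyMeasurable.mul
      hg.aestronglyMeasurable)
    (fun k => ae_of_all _ fun θ => by rw [norm_mul, norm_pow, hr])
    (ae_of_all _ fun θ => (summable_geometric_of_lt_one (norm_nonneg z) hz).mul_right _)
    (by simpa only [tsum_mul_right] using hg.norm.const_mul _)
    (ae_of_all _ hgeom)
  have hterm : (fun k : ℕ => fc g k * z ^ k)
      = fun k => (2 * π : ℂ)⁻¹ * ∫ θ, r θ ^ k * tr g θ ∂μc := by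
    ext k
    rw [fc, mul_assoc, ← integral_mul_const]
    congr 2; ext θ
    simp only [r, mul_pow, ← Complex.exp_nat_mul]
    push_cast
    ring_nf
  rw [hterm]
  exact hint.mul_left _

end Fourier

lemma hasSum_eval_mul {R : Type*} [NormedCommRing R] [CompleteSpace R] (Q : R[X]) {a : ℕ → R}
    {z S : R} (hS : HasSum (fun k => a k * z ^ k) S) (ha : Summable fun k => ‖a k * z ^ k‖) :
    HasSum (fun m => (∑ p ∈ antidiagonal m, Q.coeff p.1 * a p.2) * z ^ m) (Q.eval z * S) := by
  have hQ : HasSum (fun j => Q.coeff j * z ^ j) (Q.eval z) := by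
    rw [eval_eq_sum_range]
    exact hasSum_sum_of_ne_finset_zero fun j hj => by
      rw [coeff_eq_zero_of_natDegree_lt (by simpa using hj), zero_mul]
  have hQn : Summable fun j => ‖Q.coeff j * z ^ j‖ :=
    summable_of_ne_finset_zero (s := range (Q.natDegree + 1)) fun j hj => by
      rw [coeff_eq_zero_of_natDegree_lt (by simpa using hj), zero_mul, norm_zero]
  have hprod : (fun m => (∑ p ∈ antidiagonal m, Q.coeff p.1 * a p.2) * z ^ m)
      = fun m => ∑ p ∈ antidiagonal m, Q.coeff p.1 * z ^ p.1 * (a p.2 * z ^ p.2) := by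
    ext m
    rw [sum_mul]
    refine sum_congr rfl fun p hp => ?_
    rw [← mem_antidiagonal.mp hp, pow_add]
    ring
  rw [hprod, hQ.tsum_eq.symm, hS.tsum_eq.symm,
    tsum_mul_tsum_eq_tsum_sum_antidiagonal_of_summable_norm hQn ha]
  exact (summable_norm_sum_mul_antidiagonal_of_summable_norm hQn ha).of_norm.hasSum

section Reciprocal

variable {n : ℕ} {q : ℂ[X]}

lemma natDegree_recip_le (hq : q.natDegree ≤ n) : (recip n q).natDegree ≤ n :=
  natDegree_reflect_le.trans (max_le le_rfl (natDegree_map_le.trans hq))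

lemma eval_recip_eq_zero_iff (hq : q.natDegree ≤ n) {w : ℂ} (hw : ‖w‖ = 1) :
    (recip n q).eval w = 0 ↔ q.eval w = 0 := by
  have hw0 : w ≠ 0 := norm_ne_zero_iff.mp (hw.trans_ne one_ne_zero)
  let : Invertible (starRingEnd ℂ w) := invertibleOfNonzero ((_root_.map_ne_zero _).mpr hw0)
  have h := eval₂_reflect_eq_zero_iff (RingHom.id ℂ) (starRingEnd ℂ w) n (q.map (starRingEnd ℂ))
    (natDegree_map_le.trans hq)
  rwa [invOf_eq_inv, ← map_inv₀, Complex.inv_eq_conj hw, Complex.conj_conj, eval₂_map,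
    RingHom.id_comp, eval₂_at_apply, map_eq_zero] at h

end Reciprocal

theorem stmt3_general (f : ℂ → ℂ) (n : ℕ) (q : Polynomial ℂ)
    (hf2 : MemL2circ f) (hfH : ∀ k : ℤ, 0 ≤ k → fc f k = 0)
    (hdeg : q.natDegree ≤ n)
    (hroots : ∀ z : ℂ, q.eval z = 0 → ‖z‖ < 1) :
    ∃ p : Polynomial ℂ, p.degree < (n : WithBot ℕ) ∧
      ∀ z ∈ Metric.ball (0 : ℂ) 1,
        (recip n q).eval z *
            Pplus (fun w => f w * q.eval w / (recip n q).eval w) z = p.eval z := by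
  set g : ℂ → ℂ := fun w => f w * q.eval w / (recip n q).eval w
  have hf : Integrable (tr f) μc := hf2.integrable one_le_two
  have hrecip (w : ℂ) (hw : ‖w‖ = 1) : (recip n q).eval w ≠ 0 := fun h =>
    (hroots w ((eval_recip_eq_zero_iff hdeg hw).mp h)).ne hw
  have hg : Integrable (tr g) μc := by
    refine (integrable_tr_mul hf (F := fun w => q.eval w / (recip n q).eval w) ?_).congr
      (ae_of_all _ fun θ => by simp only [tr, g]; ring)
    exact q.continuous.continuousOn.div (recip n q).continuous.continuousOn
      fun w hw => hrecip w (mem_sphere_zero_iff_norm.mp hw)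
  have htr : tr (fun w => (recip n q).eval w * g w) = tr (fun w => q.eval w * f w) := by
    ext θ
    simp only [tr, g]
    field_simp [hrecip _ (Complex.norm_exp_ofReal_mul_I θ)]
  set b : ℕ → ℂ := fun m => ∑ p ∈ antidiagonal m, (recip n q).coeff p.1 * fc g p.2
  have hb (m : ℕ) (hm : n ≤ m) : b m = 0 := by
    show ∑ p ∈ antidiagonal m, (recip n q).coeff p.1 * fc g p.2 = 0
    rw [← fc_eval_mul hg _ ((natDegree_recip_le hdeg).trans hm), fc, htr, ← fc,
      fc_eval_mul hf _ (hdeg.trans hm)]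
    exact sum_eq_zero fun p _ => by rw [hfH _ p.2.cast_nonneg, mul_zero]
  refine ⟨∑ i : Fin n, C (b i) * X ^ (i : ℕ), degree_sum_fin_lt _, fun z hz => ?_⟩
  have hz' : ‖z‖ < 1 := mem_ball_zero_iff.mp hz
  rw [← (hasSum_eval_mul _ (hasSum_Pplus hg hz') (summable_norm_fc_mul_pow g hz')).tsum_eq,
    tsum_eq_sum (s := range n) fun m hm => by
      show b m * z ^ m = 0
      rw [hb m (by simpa using hm), zero_mul],
    eval_finsetSum, ← Fin.sum_univ_eq_sum_range]
  simp only [eval_mul, eval_C, eval_pow, eval_X]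
  rfl

/-- For f ∈ H̄²'⁰ and qₙ ∈ Pₙ with all roots in the open unit disk,
q̃ₙ ⋅ P₊(f qₙ / q̃ₙ) is a polynomial of degree at most n − 1. -/
theorem stmt3 (f : ℂ → ℂ) (n : ℕ) (q : Polynomial ℂ)
    (hf2 : MemL2circ f) (hfH : ∀ k : ℤ, 0 ≤ k → fc f k = 0)
    (hq0 : q ≠ 0) (hdeg : q.natDegree ≤ n)
    (hroots : ∀ z : ℂ, q.eval z = 0 → ‖z‖ < 1) :
    ∃ p : Polynomial ℂ, p.degree < (n : WithBot ℕ) ∧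
      ∀ z ∈ Metric.ball (0 : ℂ) 1,
        (recip n q).eval z *
            Pplus (fun w => f w * q.eval w / (recip n q).eval w) z = p.eval z :=
  stmt3_general f n q hf2 hfH hdeg hroots
end
end

section
/- Let q ∈ P_N have all roots in the open unit disk, and let a, b ∈ P_{N−1} satisfy the Bezout relation a·q̃ + b·q = 1. Then for any polynomials u, v of degree at most N−1, the L²(𝕋) inner product ⟨u/q, v/q⟩ equals the inner product ⟨Q_q(z^N u a), v⟩, where Q_q(P) denotes the quotient of Euclidean division of the polynomial P by q. -/
open MeasureTheory Complex Real Polynomial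

noncomputable section

/-! On the unit circle `z̄ = z⁻¹`, so `q̃ = zᴺ q̄` and the Bezout relation reads
`1 / |q|² = zᴺ a / q + b / q̄`. Dividing `zᴺ u a = q Q + R`, the integrand `u v̄ / |q|²` splits as
`Q v̄ + conj (v R̃ / q̃) + u b ṽ / q̃`, with tildes taken in degree `N`. Since the roots of `q` lie
in the open disk, `q̃` has no zeros on the closed disk, so the last two terms are boundary values
of holomorphic functions, which vanish at `0` because `deg R, deg v < N`; by the mean value
property their integrals over the circle vanish. -/

open Metric ComplexConjugate

namespace Polynomial

variable {K : Type*} [Field K]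

theorem eval_reflect_of_ne_zero {p : K[X]} {n : ℕ} (hp : p.natDegree ≤ n) {x : K} (hx : x ≠ 0) :
    (p.reflect n).eval x = x ^ n * p.eval x⁻¹ := by
  let _ : Invertible x⁻¹ := invertibleOfNonzero (inv_ne_zero hx)
  have h := eval₂_reflect_mul_pow (RingHom.id K) x⁻¹ n p hp
  rw [invOf_eq_inv, inv_inv, ← eval, ← eval] at h
  rw [← h, mul_left_comm, ← mul_pow, mul_inv_cancel₀ hx, one_pow, mul_one]

end Polynomial

theorem eval_zero_recip (n : ℕ) (p : ℂ[X]) : (recip n p).eval 0 = conj (p.coeff n) := by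
  rw [recip, ← coeff_zero_eq_eval_zero, coeff_reflect, revAt_le (Nat.zero_le n), coeff_map,
    Nat.sub_zero]

theorem eval_recip_of_ne_zero {p : ℂ[X]} {n : ℕ} (hp : p.natDegree ≤ n) {w : ℂ} (hw : w ≠ 0) :
    (recip n p).eval w = w ^ n * conj (p.eval (conj w)⁻¹) := by
  rw [recip, eval_reflect_of_ne_zero (natDegree_map_le.trans hp) hw, eval_map,
    show w⁻¹ = conj (conj w)⁻¹ by simp, eval₂_at_apply]

theorem eval_recip_of_norm_eq_one {p : ℂ[X]} {n : ℕ} (hp : p.natDegree ≤ n) {z : ℂ}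
    (hz : ‖z‖ = 1) : (recip n p).eval z = z ^ n * conj (p.eval z) := by
  rw [eval_recip_of_ne_zero hp (norm_ne_zero_iff.mp (by simp [hz])), ← RCLike.inv_eq_conj hz,
    inv_inv]

theorem eval_recip_ne_zero_of_roots_norm_lt_one {q : ℂ[X]} {n : ℕ} (hqd : q.natDegree = n)
    (hroots : ∀ z : ℂ, q.eval z = 0 → ‖z‖ < 1) {w : ℂ} (hw : ‖w‖ ≤ 1) :
    (recip n q).eval w ≠ 0 := by
  rcases eq_or_ne w 0 with rfl | hw0
  · have hq0 : q ≠ 0 := fun h => by simpa [h] using hroots 1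
    rw [eval_zero_recip, ← hqd, _root_.map_ne_zero]
    exact leadingCoeff_ne_zero.mpr hq0
  · rw [eval_recip_of_ne_zero hqd.le hw0]
    refine mul_ne_zero (pow_ne_zero _ hw0) ((_root_.map_ne_zero _).mpr fun h => ?_)
    have h1 : 1 ≤ ‖(conj w)⁻¹‖ := by
      rw [norm_inv, Complex.norm_conj]
      exact one_le_inv₀ (norm_pos_iff.mpr hw0) |>.mpr hw
    exact (hroots _ h).not_ge h1

theorem continuous_tr {f : ℂ → ℂ} (hf : ContinuousOn f (sphere 0 1)) : Continuous (tr f) :=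
  hf.comp_continuous (by fun_prop) fun θ => by simp

theorem integrable_tr {f : ℂ → ℂ} (hf : ContinuousOn f (sphere 0 1)) : Integrable (tr f) μc :=
  (continuous_tr hf).integrableOn_Ioc

theorem integral_tr_eq_two_pi_mul {f : ℂ → ℂ} (hf : DiffContOnCl ℂ f (ball 0 1)) :
    ∫ θ, tr f θ ∂μc = 2 * π * f 0 := by
  have h := (abs_one (α := ℝ)).symm ▸ hf |>.circleAverage
  rw [Real.circleAverage_def, Complex.real_smul, Complex.ofReal_inv,
    inv_mul_eq_iff_eq_mul₀ (by exact_mod_cast Real.two_pi_pos.ne')] at h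
  simpa [μc, tr, intervalIntegral.integral_of_le Real.two_pi_pos.le, circleMap_zero] using h

section RationalOnDisk

variable {P S : ℂ[X]}

theorem differentiableOn_eval_div_closedBall (hS : ∀ w : ℂ, ‖w‖ ≤ 1 → S.eval w ≠ 0) :
    DifferentiableOn ℂ (fun z => P.eval z / S.eval z) (closedBall 0 1) := fun z hz =>
  (P.differentiableAt.div S.differentiableAt
    (hS z (mem_closedBall_zero_iff.mp hz))).differentiableWithinAt

theorem integrable_tr_eval_div (hS : ∀ w : ℂ, ‖w‖ ≤ 1 → S.eval w ≠ 0) :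
    Integrable (tr fun z => P.eval z / S.eval z) μc :=
  integrable_tr <|
    (differentiableOn_eval_div_closedBall hS).continuousOn.mono sphere_subset_closedBall

theorem integral_tr_eval_div_eq_zero (hS : ∀ w : ℂ, ‖w‖ ≤ 1 → S.eval w ≠ 0)
    (hP : P.eval 0 = 0) :
    ∫ θ, tr (fun z => P.eval z / S.eval z) θ ∂μc = 0 := by
  rw [integral_tr_eq_two_pi_mul, hP, zero_div, mul_zero]
  exact (differentiableOn_eval_div_closedBall hS).diffContOnCl_ball subset_rfl

end RationalOnDisk

theorem eval_zero_recip_of_degree_lt {p : ℂ[X]} {n : ℕ} (hp : p.degree < n) :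
    (recip n p).eval 0 = 0 := by
  rw [eval_zero_recip, coeff_eq_zero_of_degree_lt hp, map_zero]

theorem div_mul_conj_div_eq_of_norm_eq_one {N : ℕ} {q a b u v : ℂ[X]} (hq : q.Monic)
    (hqd : q.natDegree = N) (hbez : a * recip N q + b * q = 1) (hv : v.natDegree ≤ N) {z : ℂ}
    (hz : ‖z‖ = 1) (hqz : q.eval z ≠ 0) :
    u.eval z / q.eval z * conj (v.eval z / q.eval z) =
      ((X ^ N * u * a) /ₘ q).eval z * conj (v.eval z)
        + conj ((v * recip N ((X ^ N * u * a) %ₘ q)).eval z / (recip N q).eval z)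
        + (u * b * recip N v).eval z / (recip N q).eval z := by
  have hdiv := congrArg (eval z) (modByMonic_add_div (X ^ N * u * a) q)
  set Q := (X ^ N * u * a) /ₘ q
  set R := (X ^ N * u * a) %ₘ q
  simp only [eval_add, eval_mul, eval_pow, eval_X] at hdiv
  have hz0 : z ≠ 0 := norm_ne_zero_iff.mp (by simp [hz])
  have hbez' : a.eval z * (z ^ N * conj (q.eval z)) + b.eval z * q.eval z = 1 := by
    simpa [eval_recip_of_norm_eq_one hqd.le hz] using congrArg (eval z) hbez
  have hRd : R.natDegree ≤ N := hqd ▸ natDegree_modByMonic_le _ hq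
  simp only [eval_mul, eval_recip_of_norm_eq_one hqd.le hz, eval_recip_of_norm_eq_one hRd hz,
    eval_recip_of_norm_eq_one hv hz, map_div₀, map_mul, map_pow, Complex.conj_conj]
  have hqc : conj (q.eval z) ≠ 0 := (_root_.map_ne_zero _).mpr hqz
  have hzc : conj z ≠ 0 := (_root_.map_ne_zero _).mpr hz0
  field_simp
  linear_combination
    -(u.eval z * conj (v.eval z)) * hbez' - conj (v.eval z) * conj (q.eval z) * hdiv

theorem stmt13_general (N : ℕ) (q a b u v : Polynomial ℂ)
    (hq : q.Monic) (hqd : q.natDegree = N)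
    (hroots : ∀ z : ℂ, q.eval z = 0 → ‖z‖ < 1)
    (hbez : a * recip N q + b * q = 1)
    (hv : v.degree < (N : WithBot ℕ)) :
    innerC (fun z => u.eval z / q.eval z) (fun z => v.eval z / q.eval z) =
      innerC (fun z => ((Polynomial.X ^ N * u * a) /ₘ q).eval z)
        (fun z => v.eval z) := by
  set Q := (X ^ N * u * a) /ₘ q
  set R := (X ^ N * u * a) %ₘ q
  have hden (w : ℂ) (hw : ‖w‖ ≤ 1) : (recip N q).eval w ≠ 0 :=
    eval_recip_ne_zero_of_roots_norm_lt_one hqd hroots hw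
  have hR : R.degree < N := by
    simpa [degree_eq_natDegree hq.ne_zero, hqd] using degree_modByMonic_lt (X ^ N * u * a) hq
  set F := tr fun z => (v * recip N R).eval z / (recip N q).eval z
  set G := tr fun z => (u * b * recip N v).eval z / (recip N q).eval z
  have hF : ∫ θ, F θ ∂μc = 0 :=
    integral_tr_eval_div_eq_zero hden (by rw [eval_mul, eval_zero_recip_of_degree_lt hR, mul_zero])
  have hG : ∫ θ, G θ ∂μc = 0 :=
    integral_tr_eval_div_eq_zero hden (by rw [eval_mul, eval_zero_recip_of_degree_lt hv, mul_zero])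
  set P := tr fun z => Q.eval z * conj (v.eval z)
  have hP : Integrable P μc := integrable_tr (by fun_prop)
  have hFc : Integrable (fun θ => conj (F θ)) μc := by
    simpa using Complex.conjCLE.toContinuousLinearMap.integrable_comp (integrable_tr_eval_div hden)
  have hpt (θ : ℝ) :
      tr (fun z => u.eval z / q.eval z) θ * conj (tr (fun z => v.eval z / q.eval z) θ)
        = P θ + conj (F θ) + G θ := by
    have hz : ‖exp (θ * I)‖ = 1 := Complex.norm_exp_ofReal_mul_I θ
    exact div_mul_conj_div_eq_of_norm_eq_one hq hqd hbez (natDegree_le_of_degree_le hv.le) hz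
      fun h => (hroots _ h).ne hz
  simp only [innerC, hpt]
  have hPF : Integrable (fun θ => P θ + conj (F θ)) μc := hP.add hFc
  rw [integral_add hPF (integrable_tr_eval_div hden), integral_add hP hFc,
    integral_conj, hF, hG, map_zero, add_zero, add_zero]
  rfl

/-- With q ∈ P_N monic with all roots in the open unit disk and a, b ∈ P_{N−1}
satisfying the Bezout relation a·q̃ + b·q = 1, the L²(𝕋) inner product
⟨u/q, v/q⟩ equals ⟨Q_q(z^N u a), v⟩ for all u, v ∈ P_{N−1}, where Q_q(P) is the
quotient of the Euclidean division of P by q. -/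
theorem stmt13 (N : ℕ) (hN : 1 ≤ N) (q a b u v : Polynomial ℂ)
    (hq : q.Monic) (hqd : q.natDegree = N)
    (hroots : ∀ z : ℂ, q.eval z = 0 → ‖z‖ < 1)
    (ha : a.degree < (N : WithBot ℕ)) (hb : b.degree < (N : WithBot ℕ))
    (hbez : a * recip N q + b * q = 1)
    (hu : u.degree < (N : WithBot ℕ)) (hv : v.degree < (N : WithBot ℕ)) :
    innerC (fun z => u.eval z / q.eval z) (fun z => v.eval z / q.eval z) =
      innerC (fun z => ((Polynomial.X ^ N * u * a) /ₘ q).eval z)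
        (fun z => v.eval z) :=
  stmt13_general N q a b u v hq hqd hroots hbez hv
end
end

section
/- Let f ∈ H̄²'⁰ and π_n a polynomial of degree at most n with no roots on the unit circle. Then d₂(f, R_{n−1,n}) ≥ min over q_n ∈ P_{π_n} and p_{n−1} ∈ P_{n−1} of ‖(q_n f − p_{n−1})/π_n‖₂, where P_{π_n} = {q_n of degree ≤ n : ‖q_n/π_n‖_∞ = 1}. -/
/-!
Every `r = p / q ∈ R_{n-1,n}` yields a competitor: rescale `q` so that `‖q / πₙ‖_∞ = 1` on `𝕋`.
Then `(q f - p) / πₙ = (q / πₙ) (f - r)` on `𝕋`, so the linearized error is pointwise dominated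
by `|f - r|`, and taking infima gives the bound.
-/

open MeasureTheory Complex Real Polynomial

noncomputable section

/-- Rational functions of type (n−1, n) without poles on the unit circle,
viewed through their boundary values. -/
def RcircSet (n : ℕ) : Set (ℂ → ℂ) :=
  {r | ∃ p q : Polynomial ℂ, p.degree < (n : WithBot ℕ) ∧ q.natDegree ≤ n ∧
      (∀ z : ℂ, ‖z‖ = 1 → q.eval z ≠ 0) ∧
      ∀ z : ℂ, ‖z‖ = 1 → r z = p.eval z / q.eval z}

instance inst_s16 : IsFiniteMeasure μc := by
  unfold μc; infer_instance

lemma exp_ofReal_mul_I_mem_sphere (θ : ℝ) :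
    Complex.exp ((θ : ℂ) * Complex.I) ∈ Metric.sphere (0 : ℂ) 1 :=
  mem_sphere_zero_iff_norm.mpr (Complex.norm_exp_ofReal_mul_I θ)

lemma tr_congr {g h : ℂ → ℂ} (hgh : ∀ z : ℂ, ‖z‖ = 1 → g z = h z) : tr g = tr h :=
  funext fun θ => hgh _ (Complex.norm_exp_ofReal_mul_I θ)

lemma l2_congr {g h : ℂ → ℂ} (hgh : ∀ z : ℂ, ‖z‖ = 1 → g z = h z) : l2 g = l2 h := by
  simp only [l2, l2sq, tr_congr hgh]

lemma memL2circ_of_continuousOn {g : ℂ → ℂ} (hg : ContinuousOn g (Metric.sphere 0 1)) :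
    MemL2circ g := by
  obtain ⟨C, hC⟩ := (isCompact_sphere (0 : ℂ) 1).exists_bound_of_continuousOn hg
  have hcont : Continuous (tr g) :=
    hg.comp_continuous (by fun_prop) exp_ofReal_mul_I_mem_sphere
  exact MemLp.of_bound hcont.aestronglyMeasurable C
    (ae_of_all _ fun θ => hC _ (exp_ofReal_mul_I_mem_sphere θ))

lemma l2_le_l2_of_norm_le {g h : ℂ → ℂ} (hh : MemL2circ h)
    (hle : ∀ z : ℂ, ‖z‖ = 1 → ‖g z‖ ≤ ‖h z‖) : l2 g ≤ l2 h := by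
  -- `g` need not be measurable: a non-integrable `‖tr g‖ ^ 2` has Bochner integral `0`.
  refine Real.sqrt_le_sqrt (mul_le_mul_of_nonneg_left ?_ (by positivity))
  refine integral_mono_of_nonneg (ae_of_all _ fun θ => by positivity) hh.norm.integrable_sq
    (ae_of_all _ fun θ => ?_)
  exact pow_le_pow_left₀ (norm_nonneg _) (hle _ (Complex.norm_exp_ofReal_mul_I θ)) 2

lemma l2_mul_le_of_norm_le_one {u v : ℂ → ℂ} (hu : ∀ z : ℂ, ‖z‖ = 1 → ‖u z‖ ≤ 1)
    (hv : MemL2circ v) : l2 (fun z => u z * v z) ≤ l2 v :=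
  l2_le_l2_of_norm_le hv fun z hz => by
    rw [norm_mul]
    exact mul_le_of_le_one_left (norm_nonneg _) (hu z hz)

lemma IsCompact.exists_pos_mul_norm_le_one_eq_one {X E : Type*} [TopologicalSpace X]
    [SeminormedAddGroup E] {K : Set X} (hK : IsCompact K) {g : X → E} (hg : ContinuousOn g K)
    {x₀ : X} (hx₀ : x₀ ∈ K) (hgx₀ : 0 < ‖g x₀‖) :
    ∃ c : ℝ, 0 < c ∧ (∀ x ∈ K, c * ‖g x‖ ≤ 1) ∧ ∃ x ∈ K, c * ‖g x‖ = 1 := by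
  obtain ⟨x₁, hx₁, hmax⟩ := hK.exists_isMaxOn ⟨x₀, hx₀⟩ hg.norm
  have hM : 0 < ‖g x₁‖ := hgx₀.trans_le (hmax hx₀)
  refine ⟨‖g x₁‖⁻¹, inv_pos.mpr hM, fun x hx => ?_, x₁, hx₁, inv_mul_cancel₀ hM.ne'⟩
  rw [inv_mul_le_iff₀ hM, mul_one]
  exact hmax hx

lemma continuousOn_eval_div_eval (p q : Polynomial ℂ)
    (hq : ∀ z : ℂ, ‖z‖ = 1 → q.eval z ≠ 0) :
    ContinuousOn (fun z => p.eval z / q.eval z) (Metric.sphere 0 1) :=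
  p.continuous.continuousOn.div q.continuous.continuousOn
    fun z hz => hq z (mem_sphere_zero_iff_norm.mp hz)

lemma zero_mem_RcircSet (n : ℕ) : (fun _ => 0) ∈ RcircSet n :=
  ⟨0, 1, by simp, by simp, by simp, by simp⟩

lemma exists_linearized_error_le {f r : ℂ → ℂ} {n : ℕ} {πn : Polynomial ℂ}
    (hf2 : MemL2circ f) (hπ : ∀ z : ℂ, ‖z‖ = 1 → πn.eval z ≠ 0) (hr : r ∈ RcircSet n) :
    ∃ qn pp : Polynomial ℂ, qn.natDegree ≤ n ∧ pp.degree < (n : WithBot ℕ) ∧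
      (∀ z : ℂ, ‖z‖ = 1 → ‖qn.eval z / πn.eval z‖ ≤ 1) ∧
      (∃ z : ℂ, ‖z‖ = 1 ∧ ‖qn.eval z / πn.eval z‖ = 1) ∧
      l2 (fun z => (qn.eval z * f z - pp.eval z) / πn.eval z) ≤ l2 (fun z => f z - r z) := by
  obtain ⟨p, q, hp, hq, hq0, hr⟩ := hr
  have h1 : ‖(1 : ℂ)‖ = 1 := norm_one
  obtain ⟨c, hc, hle, z₀, hz₀, heq⟩ :=
    (isCompact_sphere (0 : ℂ) 1).exists_pos_mul_norm_le_one_eq_one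
      (continuousOn_eval_div_eval q πn hπ) (mem_sphere_zero_iff_norm.mpr h1)
      (norm_pos_iff.mpr (div_ne_zero (hq0 1 h1) (hπ 1 h1)))
  have hnorm (z : ℂ) : ‖((c : ℂ) • q).eval z / πn.eval z‖ = c * ‖q.eval z / πn.eval z‖ := by
    rw [eval_smul, smul_eq_mul, mul_div_assoc, norm_mul, Complex.norm_real,
      Real.norm_of_nonneg hc.le]
  have hbound (z : ℂ) (hz : ‖z‖ = 1) : ‖((c : ℂ) • q).eval z / πn.eval z‖ ≤ 1 :=
    (hnorm z).trans_le (hle z (mem_sphere_zero_iff_norm.mpr hz))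
  refine ⟨(c : ℂ) • q, (c : ℂ) • p, (natDegree_smul_le _ _).trans hq,
    (degree_smul_le _ _).trans_lt hp, hbound,
    ⟨z₀, mem_sphere_zero_iff_norm.mp hz₀, (hnorm z₀).trans heq⟩, ?_⟩
  have hfactor : ∀ z : ℂ, ‖z‖ = 1 →
      (((c : ℂ) • q).eval z * f z - ((c : ℂ) • p).eval z) / πn.eval z =
        ((c : ℂ) • q).eval z / πn.eval z * (f z - r z) := by
    intro z hz
    have := hq0 z hz
    rw [hr z hz, eval_smul, eval_smul, smul_eq_mul, smul_eq_mul]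
    field_simp
  rw [l2_congr hfactor]
  refine l2_mul_le_of_norm_le_one hbound (hf2.sub (memL2circ_of_continuousOn ?_))
  exact (continuousOn_eval_div_eval p q hq0).congr
    fun z hz => hr z (mem_sphere_zero_iff_norm.mp hz)

theorem stmt16_general (f : ℂ → ℂ) (n : ℕ) (πn : Polynomial ℂ)
    (hf2 : MemL2circ f)
    (hπ : ∀ z : ℂ, ‖z‖ = 1 → πn.eval z ≠ 0) :
    sInf {x : ℝ | ∃ qn pp : Polynomial ℂ, qn.natDegree ≤ n ∧
        pp.degree < (n : WithBot ℕ) ∧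
        (∀ z : ℂ, ‖z‖ = 1 → ‖qn.eval z / πn.eval z‖ ≤ 1) ∧
        (∃ z : ℂ, ‖z‖ = 1 ∧ ‖qn.eval z / πn.eval z‖ = 1) ∧
        x = l2 (fun z => (qn.eval z * f z - pp.eval z) / πn.eval z)} ≤
      d2circ f (RcircSet n) := by
  refine le_csInf ⟨_, _, zero_mem_RcircSet n, rfl⟩ ?_
  rintro _ ⟨r, hr, rfl⟩
  obtain ⟨qn, pp, hqn, hpp, hle, hmax, hlin⟩ := exists_linearized_error_le hf2 hπ hr
  refine (csInf_le ⟨0, ?_⟩ ?_).trans hlin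
  · rintro _ ⟨_, _, -, -, -, -, rfl⟩
    exact Real.sqrt_nonneg _
  · exact ⟨qn, pp, hqn, hpp, hle, hmax, rfl⟩

/-- Lower bound via linearized errors: for f ∈ H̄²'⁰ and πₙ ∈ Pₙ with no roots
on the circle, d₂(f, R_{n−1,n}) is at least the infimum, over qₙ ∈ Pₙ with
‖qₙ/πₙ‖_∞ = 1 and p_{n−1} ∈ P_{n−1}, of ‖(qₙ f − p_{n−1}) / πₙ‖₂. -/
theorem stmt16 (f : ℂ → ℂ) (n : ℕ) (πn : Polynomial ℂ)
    (hf2 : MemL2circ f) (hfH : ∀ k : ℤ, 0 ≤ k → fc f k = 0)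
    (hπdeg : πn.natDegree ≤ n)
    (hπ : ∀ z : ℂ, ‖z‖ = 1 → πn.eval z ≠ 0) :
    sInf {x : ℝ | ∃ qn pp : Polynomial ℂ, qn.natDegree ≤ n ∧
        pp.degree < (n : WithBot ℕ) ∧
        (∀ z : ℂ, ‖z‖ = 1 → ‖qn.eval z / πn.eval z‖ ≤ 1) ∧
        (∃ z : ℂ, ‖z‖ = 1 ∧ ‖qn.eval z / πn.eval z‖ = 1) ∧
        x = l2 (fun z => (qn.eval z * f z - pp.eval z) / πn.eval z)} ≤
      d2circ f (RcircSet n) :=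
  stmt16_general f n πn hf2 hπ
end
end

section
/- If (b_k) is a sequence of points in the closed unit disk converging to b ∈ closed unit disk, then ∫₀^{2π} |log|1 − e^{iθ} b_k|| dθ converges to ∫₀^{2π} |log|1 − e^{iθ} b|| dθ. -/
/-!
Since `|log x| = 2 log⁺ x - log x`, the integral splits into two pieces. The integrand
`log⁺ ‖1 - e^{iθ} c‖` is jointly continuous in `(c, θ)`, so its integral is continuous in `c`.
The other piece is a circle average: `‖1 - e^{iθ} c‖ = ‖e^{iθ} - c̄‖`, and by Jensen's formula
`∫₀^{2π} log ‖e^{iθ} - a‖ dθ = 2π log⁺ ‖a‖`, again continuous in `c`.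
-/

open Complex Real Filter MeasureTheory intervalIntegral ComplexConjugate

lemma norm_one_sub_exp_mul_I_mul (θ : ℝ) (c : ℂ) :
    ‖1 - exp (θ * I) * c‖ = ‖circleMap 0 1 θ - conj c‖ := by
  set w := exp (θ * I)
  have hw : ‖w‖ = 1 := norm_exp_ofReal_mul_I θ
  have hww : w * conj w = 1 := by
    rw [mul_conj, normSq_eq_norm_sq, hw]; simp
  calc ‖1 - w * c‖ = ‖w * conj (1 - w * c)‖ := by rw [norm_mul, hw, one_mul, norm_conj]
    _ = ‖circleMap 0 1 θ - conj c‖ := by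
      rw [circleMap_zero, map_sub, map_one, map_mul, mul_sub, ← mul_assoc, hww]
      simp [w]

lemma intervalIntegrable_log_norm_one_sub_exp_mul_I_mul (c : ℂ) :
    IntervalIntegrable (fun θ : ℝ => Real.log ‖1 - exp (θ * I) * c‖) volume 0 (2 * π) := by
  simp_rw [norm_one_sub_exp_mul_I_mul]
  exact circleIntegrable_log_norm_sub_const (a := conj c) (c := 0) 1

lemma integral_log_norm_one_sub_exp_mul_I_mul (c : ℂ) :
    ∫ θ in (0 : ℝ)..(2 * π), Real.log ‖1 - exp (θ * I) * c‖ = 2 * π * log⁺ ‖c‖ := by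
  have h := circleAverage_log_norm_sub_const_eq_posLog (a := conj c)
  rw [circleAverage_def, norm_conj, smul_eq_mul, inv_mul_eq_iff_eq_mul₀ (by positivity)] at h
  simpa only [norm_one_sub_exp_mul_I_mul] using h

lemma abs_log_eq_two_mul_posLog_sub_log (x : ℝ) : |Real.log x| = 2 * log⁺ x - Real.log x := by
  rw [← half_mul_log_add_log_abs]; ring

lemma integral_abs_log_norm_one_sub_exp_mul_I_mul (c : ℂ) :
    ∫ θ in (0 : ℝ)..(2 * π), |Real.log ‖1 - exp (θ * I) * c‖| =
      2 * (∫ θ in (0 : ℝ)..(2 * π), log⁺ ‖1 - exp (θ * I) * c‖) - 2 * π * log⁺ ‖c‖ := by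
  have hpos : IntervalIntegrable (fun θ : ℝ => log⁺ ‖1 - exp (θ * I) * c‖) volume 0 (2 * π) :=
    Continuous.intervalIntegrable (by fun_prop) _ _
  simp_rw [abs_log_eq_two_mul_posLog_sub_log]
  rw [integral_sub (hpos.const_mul 2) (intervalIntegrable_log_norm_one_sub_exp_mul_I_mul c),
    intervalIntegral.integral_const_mul, integral_log_norm_one_sub_exp_mul_I_mul]

lemma continuous_integral_abs_log_norm_one_sub_exp_mul_I_mul :
    Continuous fun c : ℂ => ∫ θ in (0 : ℝ)..(2 * π), |Real.log ‖1 - exp (θ * I) * c‖| := by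
  simp_rw [integral_abs_log_norm_one_sub_exp_mul_I_mul]
  have : Continuous fun c : ℂ => ∫ θ in (0 : ℝ)..(2 * π), log⁺ ‖1 - exp (θ * I) * c‖ :=
    continuous_parametric_intervalIntegral_of_continuous' (by fun_prop) _ _
  fun_prop

theorem stmt18_general (b : ℂ) (bk : ℕ → ℂ) (hconv : Tendsto bk atTop (nhds b)) :
    Tendsto
      (fun k => ∫ θ in (0 : ℝ)..(2 * π),
        |Real.log ‖1 - Complex.exp ((θ : ℂ) * Complex.I) * bk k‖|)
      atTop
      (nhds (∫ θ in (0 : ℝ)..(2 * π),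
        |Real.log ‖1 - Complex.exp ((θ : ℂ) * Complex.I) * b‖|)) :=
  (continuous_integral_abs_log_norm_one_sub_exp_mul_I_mul.tendsto b).comp hconv

/-- If (b_k) is a sequence in the closed unit disk converging to b, then
∫₀^{2π} |log |1 − e^{iθ} b_k|| dθ converges to ∫₀^{2π} |log |1 − e^{iθ} b|| dθ. -/
theorem stmt18 (b : ℂ) (bk : ℕ → ℂ) (hb : ‖b‖ ≤ 1)
    (hbk : ∀ k, ‖bk k‖ ≤ 1) (hconv : Tendsto bk atTop (nhds b)) :
    Tendsto
      (fun k => ∫ θ in (0 : ℝ)..(2 * π),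
        |Real.log ‖1 - Complex.exp ((θ : ℂ) * Complex.I) * bk k‖|)
      atTop
      (nhds (∫ θ in (0 : ℝ)..(2 * π),
        |Real.log ‖1 - Complex.exp ((θ : ℂ) * Complex.I) * b‖|)) :=
  stmt18_general b bk hconv
end
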